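/- arXiv:1803.06903 — 4 statements merged into one kernel-verified Lean document; each statement's English description precedes it below -/
import Mathlib

section
/- Let X be a countably infinite set and p a discrete probability measure on X with p(x) > 0 for all x ∈ X. Let B ⊆ X^{ℤ≥1} be the set of sequences (y_i) for which there exists a function f : X → ℝ≥0 such that the sum ∑_{x∈X} f(x)·p(x) converges, but the limit lim_{n→∞} (1/n)∑_{i=1}^n f(y_i) does not exist in ℝ. Then B has measure 1 with respect to the product measure on X^{ℤ≥1} induced by p. -/
/-!
Fix `ε > 0` and call `x` light at time `n` if `(n + 1) p(x) < ε`. The events "`y n` is light at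
time `n`" are independent, and their probabilities have divergent sum: each of the infinitely many
atoms with `p(x) < ε / 2` is light at about `ε / p(x)` times and so contributes at least `ε / 2`.
By the second Borel–Cantelli lemma, almost surely for every `k` there is a time `nₖ` with
`(nₖ + 1) p(y nₖ) < 4⁻ᵏ`. Then `f = ∑ₖ 2⁻ᵏ 𝟙{y nₖ} / p` has `∑ f p = 2`, while the average of
`f ∘ y` up to time `nₖ + 1` is at least `2ᵏ`.
-/

open MeasureTheory Filter Topology ProbabilityTheory
open scoped ENNReal

theorem exists_summable_mul_not_tendsto_average {X : Type*} (p : X → ℝ) (hp : ∀ x, 0 < p x)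
    (y : ℕ → X) (hy : ∀ k : ℕ, ∃ n : ℕ, (n + 1) * p (y n) < (1 / 4 : ℝ) ^ k) :
    ∃ f : X → ℝ, (∀ x, 0 ≤ f x) ∧ Summable (fun x => f x * p x) ∧
      ¬ ∃ L : ℝ, Tendsto (fun n : ℕ => (∑ i ∈ Finset.range n, f (y i)) / n) atTop (𝓝 L) := by
  choose n hn using hy
  -- The times `n k` may visit the same atom repeatedly, so weights are summed over fibres.
  set w : X → ℝ := fun x => ∑' k : (fun k => y (n k)) ⁻¹' {x}, (1 / 2 : ℝ) ^ (k : ℕ)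
  have hw_nonneg : ∀ x, 0 ≤ w x := fun x => tsum_nonneg fun _ => by positivity
  have hw_ge : ∀ k, (1 / 2 : ℝ) ^ k ≤ w (y (n k)) := fun k =>
    (hasSum_geometric_two.summable.subtype _).le_tsum
      (⟨k, rfl⟩ : (fun k => y (n k)) ⁻¹' {y (n k)}) fun _ _ => pow_nonneg (by norm_num) _
  refine ⟨fun x => w x / p x, fun x => div_nonneg (hw_nonneg x) (hp x).le, ?_, ?_⟩
  · simp only [div_mul_cancel₀ _ (hp _).ne']
    exact (hasSum_geometric_two.tsum_fiberwise _).summable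
  · rintro ⟨L, hL⟩
    obtain ⟨C, hC⟩ := hL.bddAbove_range
    obtain ⟨k, hCk⟩ := exists_nat_gt C
    have hpN : 0 < (n k + 1 : ℝ) * p (y (n k)) := by have := hp (y (n k)); positivity
    have hk : (k : ℝ) < (∑ i ∈ Finset.range (n k + 1), w (y i) / p (y i)) / (n k + 1 : ℕ) :=
      calc (k : ℝ) < 2 ^ k := by exact_mod_cast Nat.lt_two_pow_self
        _ = (1 / 2 : ℝ) ^ k / (1 / 4) ^ k := by rw [← div_pow]; norm_num
        _ ≤ w (y (n k)) / ((n k + 1) * p (y (n k))) :=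
          div_le_div₀ (hw_nonneg _) (hw_ge k) hpN (hn k).le
        _ = w (y (n k)) / p (y (n k)) / (n k + 1 : ℕ) := by
          rw [div_div, mul_comm]; push_cast; rfl
        _ ≤ _ := by
          gcongr
          exact Finset.single_le_sum (f := fun i => w (y i) / p (y i))
            (fun i _ => div_nonneg (hw_nonneg _) (hp _).le) (Finset.self_mem_range_succ _)
    exact (hk.trans_le (hC (Set.mem_range_self _))).not_gt hCk

section ProductMeasure

variable {ι X : Type*} [MeasurableSpace X] {μ : Measure X} {π : Measure (ι → X)}

lemma measure_eval_preimage_of_marginals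
    (hπ : ∀ (s : Finset ι) (B : ι → Set X), π {y | ∀ i ∈ s, y i ∈ B i} = ∏ i ∈ s, μ (B i))
    (i : ι) (B : Set X) : π {y | y i ∈ B} = μ B := by
  simpa using hπ {i} fun _ => B

lemma iIndepSet_eval_preimage_of_marginals
    (hπ : ∀ (s : Finset ι) (B : ι → Set X), π {y | ∀ i ∈ s, y i ∈ B i} = ∏ i ∈ s, μ (B i))
    {B : ι → Set X} (hB : ∀ i, MeasurableSet (B i)) :
    iIndepSet (fun i => {y : ι → X | y i ∈ B i}) π := by
  rw [iIndepSet_iff_meas_biInter (f := fun i => {y : ι → X | y i ∈ B i})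
    fun i => measurable_pi_apply i (hB i)]
  intro s
  simp_rw [measure_eval_preimage_of_marginals hπ, ← hπ s B]
  congr 1
  ext y
  simp

end ProductMeasure

lemma ofReal_half_le_tsum_ite_succ_mul_lt {a : ℝ≥0∞} {ε : ℝ} (ha : 0 < a.toReal)
    (haε : a.toReal < ε / 2) :
    ENNReal.ofReal (ε / 2) ≤ ∑' n : ℕ, if (n + 1) * a.toReal < ε then a else 0 := by
  have hε : 0 < ε := by linarith
  set N := ⌈ε / 2 / a.toReal⌉₊
  have hNa : ε / 2 ≤ N * a.toReal := (div_le_iff₀ ha).1 (Nat.le_ceil _)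
  have hNa' : N * a.toReal < ε :=
    calc (N : ℝ) * a.toReal < (ε / 2 / a.toReal + 1) * a.toReal := by
          gcongr; exact Nat.ceil_lt_add_one (by positivity)
      _ = ε / 2 + a.toReal := by field_simp
      _ < ε := by linarith
  calc ENNReal.ofReal (ε / 2) ≤ ∑ _n ∈ Finset.range N, a := by
        rw [Finset.sum_const, Finset.card_range, nsmul_eq_mul,
          ← ENNReal.ofReal_toReal (ENNReal.toReal_pos_iff.1 ha).2.ne, ← ENNReal.ofReal_natCast,
          ← ENNReal.ofReal_mul (by positivity)]
        exact ENNReal.ofReal_le_ofReal hNa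
    _ = ∑ n ∈ Finset.range N, if (n + 1) * a.toReal < ε then a else 0 := by
        refine Finset.sum_congr rfl fun n hn => (if_pos ?_).symm
        have : (n + 1 : ℝ) ≤ N := by exact_mod_cast Finset.mem_range.1 hn
        nlinarith
    _ ≤ _ := ENNReal.sum_le_tsum _

section LightAtoms

variable {X : Type*} [MeasurableSpace X] [DiscreteMeasurableSpace X] [Countable X]

lemma finite_setOf_le_measure_singleton (μ : Measure X) [IsFiniteMeasure μ] {ε : ℝ≥0∞}
    (hε : ε ≠ 0) : {x | ε ≤ μ {x}}.Finite := by
  refine ENNReal.finite_const_le_of_tsum_ne_top ?_ hε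
  rw [← Set.indicator_univ (fun x => μ {x}), μ.tsum_indicator_apply_singleton _ .univ]
  exact measure_ne_top μ _

lemma tsum_measure_setOf_succ_mul_lt_eq_top [Infinite X] (μ : Measure X) [IsFiniteMeasure μ]
    (hpos : ∀ x, 0 < μ {x}) {ε : ℝ} (hε : 0 < ε) :
    ∑' n : ℕ, μ {x | (n + 1) * (μ {x}).toReal < ε} = ∞ := by
  rw [tsum_congr fun n => (μ.tsum_indicator_apply_singleton _
    (DiscreteMeasurableSpace.forall_measurableSet _)).symm, ENNReal.tsum_comm]
  simp only [Set.indicator_apply, Set.mem_ofPred_eq]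
  by_contra hfin
  have hε' : ENNReal.ofReal (ε / 2) ≠ 0 := by simpa using hε
  have hheavy := finite_setOf_le_measure_singleton μ hε'
  have hfew := ENNReal.finite_const_le_of_tsum_ne_top hfin hε'
  refine Set.infinite_univ ((hheavy.union hfew).subset fun x _ => ?_)
  by_cases hx : ENNReal.ofReal (ε / 2) ≤ μ {x}
  · exact Or.inl hx
  · exact Or.inr (ofReal_half_le_tsum_ite_succ_mul_lt
      (ENNReal.toReal_pos (hpos x).ne' (measure_ne_top μ _))
      (ENNReal.toReal_lt_of_lt_ofReal (not_le.1 hx)))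

lemma ae_exists_succ_mul_measure_singleton_lt [Infinite X] (μ : Measure X) [IsFiniteMeasure μ]
    (hpos : ∀ x, 0 < μ {x}) (π : Measure (ℕ → X)) [IsProbabilityMeasure π]
    (hπ : ∀ (s : Finset ℕ) (B : ℕ → Set X), π {y | ∀ i ∈ s, y i ∈ B i} = ∏ i ∈ s, μ (B i))
    {ε : ℝ} (hε : 0 < ε) : ∀ᵐ y ∂π, ∃ n : ℕ, (n + 1) * (μ {y n}).toReal < ε := by
  set s : ℕ → Set (ℕ → X) := fun n => {y | y n ∈ {x | (n + 1) * (μ {x}).toReal < ε}}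
  have hmeas : ∀ n, MeasurableSet (s n) := fun n =>
    measurable_pi_apply n (DiscreteMeasurableSpace.forall_measurableSet _)
  have hlimsup : π (limsup s atTop) = 1 := by
    refine measure_limsup_eq_one hmeas (iIndepSet_eval_preimage_of_marginals hπ
      fun _ => DiscreteMeasurableSpace.forall_measurableSet _) ?_
    simp_rw [s, measure_eval_preimage_of_marginals hπ]
    exact tsum_measure_setOf_succ_mul_lt_eq_top μ hpos hε
  filter_upwards [(ae_mem_iff_measure_eq
    (MeasurableSet.measurableSet_limsup hmeas).nullMeasurableSet).2
      (by rw [hlimsup, measure_univ])] with y hy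
  exact (mem_limsup_iff_frequently_mem.1 hy).exists

end LightAtoms

/-- Let `X` be a countably infinite set and `p` (here `μ`) a discrete
probability measure on `X` with `p(x) > 0` for all `x`.  Let `π` be the induced product
probability measure on the sequence space `X^{ℤ≥1}` (modelled as `ℕ → X`, characterised by
its finite-dimensional marginals being products of `μ`).  Then the set `B` of sequences
`(y_i)` for which there exists `f : X → ℝ≥0` with `∑ f(x) p(x)` convergent but
`lim (1/n) ∑_{i=1}^n f(y_i)` not existing in `ℝ` has `π`-measure `1`. -/
theorem statement0 (X : Type) [MeasurableSpace X] [DiscreteMeasurableSpace X]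
    [Countable X] [Infinite X]
    (μ : Measure X) [IsProbabilityMeasure μ] (hpos : ∀ x : X, 0 < μ {x})
    (π : Measure (ℕ → X)) [IsProbabilityMeasure π]
    (hπ : ∀ (s : Finset ℕ) (B : ℕ → Set X),
      π {y | ∀ i ∈ s, y i ∈ B i} = ∏ i ∈ s, μ (B i)) :
    π {y : ℕ → X | ∃ f : X → ℝ, (∀ x, 0 ≤ f x) ∧
        Summable (fun x => f x * (μ {x}).toReal) ∧
        ¬ ∃ L : ℝ, Tendsto (fun n : ℕ => (∑ i ∈ Finset.range n, f (y i)) / n)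
            atTop (𝓝 L)} = 1 := by
  have hlight : ∀ᵐ y ∂π, ∀ k : ℕ, ∃ n : ℕ, (n + 1) * (μ {y n}).toReal < (1 / 4 : ℝ) ^ k :=
    ae_all_iff.2 fun k => ae_exists_succ_mul_measure_singleton_lt μ hpos π hπ (by positivity)
  rw [← measure_univ (μ := π)]
  refine measure_congr (eventuallyEq_univ.2 ?_)
  filter_upwards [hlight] with y hy
  exact exists_summable_mul_not_tendsto_average _
    (fun x => ENNReal.toReal_pos (hpos x).ne' (measure_ne_top μ _)) y hy
end

section
/- Let X be a countably infinite set and p a discrete probability measure on X with p(x) > 0 for all x. Then for almost all sequences (y_i) in X^{ℤ≥1} (with respect to the product measure), the following holds: for every ε > 0 there exist infinitely many x ∈ X such that y_i = x for some index i ≤ ε/p(x). -/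
open MeasureTheory Filter Topology

private lemma statement1_aux (X : Type) [MeasurableSpace X] [DiscreteMeasurableSpace X]
    [Countable X] [Infinite X]
    (μ : Measure X) [IsProbabilityMeasure μ] (hpos : ∀ x : X, 0 < μ {x})
    (π : Measure (ℕ → X)) [IsProbabilityMeasure π]
    (hπ : ∀ (s : Finset ℕ) (B : ℕ → Set X),
      π {y | ∀ i ∈ s, y i ∈ B i} = ∏ i ∈ s, μ (B i))
    (ε : ℝ) (hε : 0 < ε) (N : ℕ) :
    π {y : ℕ → X | ∀ n, N ≤ n → ¬ ((n : ℝ) + 1) * (μ {y n}).toReal ≤ ε} = 0 := by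
  set p : X → ℝ := fun x => (μ {x}).toReal with hp_def
  have hptop : ∀ x : X, μ {x} ≠ ⊤ := fun x => measure_ne_top μ _
  have hofp : ∀ x : X, ENNReal.ofReal (p x) = μ {x} := fun x => ENNReal.ofReal_toReal (hptop x)
  have hp : ∀ x : X, 0 < p x := fun x => ENNReal.toReal_pos (hpos x).ne' (hptop x)
  set B : ℕ → Set X := fun n => {x | ((n : ℝ) + 1) * p x ≤ ε} with hB_def
  set q : ℕ → ENNReal := fun n => μ (B n) with hq_def
  have hq1 : ∀ n, q n ≤ 1 := fun n => prob_le_one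
  have hqtop : ∀ n, q n ≠ ⊤ := fun n => measure_ne_top μ _
  -- measure of a set as sum of singletons
  have hmeas : ∀ s : Set X, μ s = ∑' x : s, μ {(x : X)} := by
    intro s
    have := tsum_measure_preimage_singleton (μ := μ) (f := id) s.to_countable
      (fun b _ => MeasurableSet.of_discrete)
    simpa using this.symm
  -- divergence of ∑ q n
  have htop : ∑' n, q n = ⊤ := by
    -- rewrite via indicators
    have h1 : ∀ n, q n = ∑' x : X, (B n).indicator (fun x => μ {x}) x := by
      intro n
      rw [hq_def]
      simp only
      rw [hmeas (B n)]
      exact tsum_subtype (B n) (fun x => μ {x})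
    rw [tsum_congr h1, ENNReal.tsum_comm]
    -- restrict to the small-mass set S
    set S : Set X := {x | p x ≤ ε / 2} with hS_def
    have hScompl : {x : X | ε / 2 < p x}.Finite := by
      by_contra hinf
      rw [← Set.not_infinite, not_not] at hinf
      obtain ⟨m, hm⟩ := exists_nat_gt (2 / ε)
      obtain ⟨t, hts, htc⟩ := hinf.exists_subset_card_eq (m + 1)
      have ht1 : μ (↑t : Set X) ≤ 1 := prob_le_one
      have ht2 : μ (↑t : Set X) = ∑ x ∈ t, μ {x} := by
        have hco : (↑t : Set X) = ⋃ x ∈ t, ({x} : Set X) := by ext y; simp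
        rw [hco, measure_biUnion_finset]
        · intro x _ z _ hxz
          simp [Function.onFun, Set.disjoint_singleton, hxz]
        · exact fun _ _ => MeasurableSet.of_discrete
      have ht3 : (↑(m + 1) : ENNReal) * ENNReal.ofReal (ε / 2) ≤ μ (↑t : Set X) := by
        calc (↑(m + 1) : ENNReal) * ENNReal.ofReal (ε / 2)
            = ∑ _x ∈ t, ENNReal.ofReal (ε / 2) := by
              rw [Finset.sum_const, htc, nsmul_eq_mul]
          _ ≤ ∑ x ∈ t, μ {x} := Finset.sum_le_sum fun x hx => by
              rw [← hofp x]
              exact ENNReal.ofReal_le_ofReal (hts hx).le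
          _ = μ (↑t : Set X) := ht2.symm
      have : (↑(m + 1) : ENNReal) * ENNReal.ofReal (ε / 2) ≤ 1 := ht3.trans ht1
      rw [← ENNReal.ofReal_natCast, ← ENNReal.ofReal_mul (by positivity), ← ENNReal.ofReal_one] at this
      rw [ENNReal.ofReal_le_ofReal_iff zero_le_one] at this
      have hmc : ((m : ℝ) + 1) * (ε / 2) > 1 := by
        have h2 : (2 : ℝ) / ε < (m : ℝ) + 1 := hm.trans (by linarith)
        calc (1:ℝ) = (2 / ε) * (ε / 2) := by field_simp
        _ < ((m:ℝ) + 1) * (ε / 2) := by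
            apply mul_lt_mul_of_pos_right h2 (by positivity)
      push_cast at this
      linarith
    have hSinf : S.Infinite := by
      have : Sᶜ = {x : X | ε / 2 < p x} := by
        ext x; simp [hS_def, not_le]
      have hfin : Sᶜ.Finite := this ▸ hScompl
      have := Set.infinite_univ (α := X)
      by_contra hSf
      rw [Set.not_infinite] at hSf
      have : (Set.univ : Set X).Finite := by
        have : (Set.univ : Set X) = S ∪ Sᶜ := by simp
        rw [this]; exact hSf.union hfin
      exact Set.infinite_univ this
    -- each x in S contributes at least ofReal (ε/2)
    have hcontrib : ∀ x ∈ S, ENNReal.ofReal (ε / 2) ≤ ∑' n, (B n).indicator (fun x => μ {x}) x := by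
      intro x hx
      have hpx := hp x
      set m : ℕ := ⌈ε / (2 * p x)⌉₊ with hm_def
      have hmem : ∀ n ∈ Finset.range m, x ∈ B n := by
        intro n hn
        rw [Finset.mem_range] at hn
        have h1 : (n : ℝ) + 1 ≤ m := by exact_mod_cast hn
        have h2 : (m : ℝ) < ε / (2 * p x) + 1 := Nat.ceil_lt_add_one (by positivity)
        have : ((n : ℝ) + 1) * p x ≤ (ε / (2 * p x) + 1) * p x :=
          mul_le_mul_of_nonneg_right (h1.trans h2.le) hpx.le
        have heq : (ε / (2 * p x) + 1) * p x = ε / 2 + p x := by field_simp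
        rw [heq] at this
        have hx' : p x ≤ ε / 2 := hx
        have : ((n : ℝ) + 1) * p x ≤ ε / 2 + ε / 2 := this.trans (by linarith)
        simpa [hB_def] using this.trans_eq (by ring)
      calc ENNReal.ofReal (ε / 2)
          = ENNReal.ofReal (ε / (2 * p x)) * ENNReal.ofReal (p x) := by
            rw [← ENNReal.ofReal_mul (by positivity)]
            congr 1
            field_simp
        _ ≤ (m : ENNReal) * μ {x} := by
            rw [← hofp x]
            apply mul_le_mul_left
            rw [← ENNReal.ofReal_natCast]
            exact ENNReal.ofReal_le_ofReal (Nat.le_ceil _)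
        _ = ∑ n ∈ Finset.range m, (B n).indicator (fun x => μ {x}) x := by
            rw [Finset.sum_congr rfl (fun n hn => Set.indicator_of_mem (hmem n hn) _)]
            simp [mul_comm]
        _ ≤ ∑' n, (B n).indicator (fun x => μ {x}) x := ENNReal.sum_le_tsum _
    have hge : ∑' x : S, (ENNReal.ofReal (ε / 2)) ≤ ∑' x : X, ∑' n, (B n).indicator (fun x => μ {x}) x := by
      calc ∑' x : S, (ENNReal.ofReal (ε / 2))
          ≤ ∑' x : S, ∑' n, (B n).indicator (fun x => μ {x}) (x : X) :=
            ENNReal.tsum_le_tsum fun x => hcontrib x x.2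
        _ = ∑' x : X, S.indicator (fun x => ∑' n, (B n).indicator (fun x => μ {x}) x) x :=
            tsum_subtype S (fun x => ∑' n, (B n).indicator (fun x => μ {x}) x)
        _ ≤ ∑' x : X, ∑' n, (B n).indicator (fun x => μ {x}) x :=
            ENNReal.tsum_le_tsum fun x => Set.indicator_le_self _ _ _
    have : ∑' x : S, (ENNReal.ofReal (ε / 2) : ENNReal) = ⊤ := by
      have : Infinite ↥S := hSinf.to_subtype
      exact ENNReal.tsum_const_eq_top_of_ne_zero (by simp [hε.le]; positivity)
    rw [this] at hge
    exact top_le_iff.mp hge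
  -- real partial sums diverge
  set t : ℕ → ℝ := fun n => (q n).toReal with ht_def
  have hqt : ∀ n, q n = ENNReal.ofReal (t n) := fun n => (ENNReal.ofReal_toReal (hqtop n)).symm
  have ht01 : ∀ n, 0 ≤ t n := fun n => ENNReal.toReal_nonneg
  have htle1 : ∀ n, t n ≤ 1 := fun n => by
    rw [ht_def]; simp only
    rw [← ENNReal.toReal_one]
    exact ENNReal.toReal_mono ENNReal.one_ne_top (hq1 n)
  have hnotsum : ¬ Summable t := by
    intro hs
    have h2 := ENNReal.ofReal_tsum_of_nonneg ht01 hs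
    have h3 : ∑' n, q n = ENNReal.ofReal (∑' n, t n) := by
      rw [h2]; exact tsum_congr hqt
    rw [htop] at h3
    exact ENNReal.ofReal_ne_top h3.symm
  have hsum_div : Tendsto (fun M => ∑ i ∈ Finset.range M, t i) atTop atTop :=
    (not_summable_iff_tendsto_nat_atTop_of_nonneg ht01).mp hnotsum
  have hbound : ∀ M, π {y : ℕ → X | ∀ n, N ≤ n → ¬ ((n:ℝ)+1) * (μ {y n}).toReal ≤ ε}
      ≤ ∏ i ∈ Finset.Ico N M, (1 - q i) := by
    intro M
    have hsub : {y : ℕ → X | ∀ n, N ≤ n → ¬ ((n:ℝ)+1) * (μ {y n}).toReal ≤ ε}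
        ⊆ {y | ∀ i ∈ Finset.Ico N M, y i ∈ (B i)ᶜ} := by
      intro y hy i hi
      rw [Finset.mem_Ico] at hi
      exact fun hmem => hy i hi.1 hmem
    refine (measure_mono hsub).trans_eq ?_
    rw [hπ (Finset.Ico N M) (fun i => (B i)ᶜ)]
    refine Finset.prod_congr rfl fun i _ => ?_
    rw [measure_compl MeasurableSet.of_discrete (measure_ne_top μ _), measure_univ]
  have hexp : ∀ M, (∏ i ∈ Finset.Ico N M, (1 - q i))
      ≤ ENNReal.ofReal (Real.exp (-(∑ i ∈ Finset.Ico N M, t i))) := by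
    intro M
    calc ∏ i ∈ Finset.Ico N M, (1 - q i)
        ≤ ∏ i ∈ Finset.Ico N M, ENNReal.ofReal (Real.exp (-(t i))) := by
          refine Finset.prod_le_prod' fun i _ => ?_
          have h1 : (1:ENNReal) - q i = ENNReal.ofReal (1 - t i) := by
            rw [ENNReal.ofReal_sub _ (ht01 i), ENNReal.ofReal_one, ← hqt i]
          rw [h1]
          exact ENNReal.ofReal_le_ofReal (by linarith [Real.add_one_le_exp (-(t i))])
      _ = ENNReal.ofReal (∏ i ∈ Finset.Ico N M, Real.exp (-(t i))) := by
          rw [← ENNReal.ofReal_prod_of_nonneg (fun i _ => (Real.exp_pos _).le)]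
      _ = ENNReal.ofReal (Real.exp (-(∑ i ∈ Finset.Ico N M, t i))) := by
          rw [← Real.exp_sum]
          congr 1
          rw [Finset.sum_neg_distrib]
  have hIco : Tendsto (fun M => ∑ i ∈ Finset.Ico N M, t i) atTop atTop := by
    have h1 : Tendsto (fun M => (∑ i ∈ Finset.range M, t i) + -(∑ i ∈ Finset.range N, t i))
        atTop atTop := tendsto_atTop_add_const_right _ _ hsum_div
    refine h1.congr' (eventually_atTop.2 ⟨N, fun M hM => ?_⟩)
    rw [← sub_eq_add_neg, ← Finset.sum_Ico_eq_sub t hM]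
  have hlim : Tendsto (fun M => ENNReal.ofReal (Real.exp (-(∑ i ∈ Finset.Ico N M, t i))))
      atTop (nhds (0 : ENNReal)) := by
    have h2 : Tendsto (fun M => Real.exp (-(∑ i ∈ Finset.Ico N M, t i))) atTop (nhds 0) :=
      Real.tendsto_exp_atBot.comp (tendsto_neg_atTop_atBot.comp hIco)
    have h3 := ENNReal.tendsto_ofReal h2
    simpa using h3
  refine le_antisymm ?_ zero_le
  exact ge_of_tendsto hlim (Eventually.of_forall fun M => (hbound M).trans (hexp M))

/-- Let `X` be a countably infinite set and `μ` a discrete probability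
measure on `X` with positive mass at every point.  For the product measure `π` on the
sequence space `X^{ℤ≥1}` (modelled as `ℕ → X`, characterised by its finite-dimensional
marginals), almost all sequences `y` have the property that for every `ε > 0` there are
infinitely many `x ∈ X` such that `y_i = x` for some index `i ≤ ε / p(x)` (here the
`(i+1)`-st term of the 0-indexed sequence is the `i+1 =: i'`-th term, `i' ≤ ε / p(x)`). -/
theorem statement1 (X : Type) [MeasurableSpace X] [DiscreteMeasurableSpace X]
    [Countable X] [Infinite X]
    (μ : Measure X) [IsProbabilityMeasure μ] (hpos : ∀ x : X, 0 < μ {x})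
    (π : Measure (ℕ → X)) [IsProbabilityMeasure π]
    (hπ : ∀ (s : Finset ℕ) (B : ℕ → Set X),
      π {y | ∀ i ∈ s, y i ∈ B i} = ∏ i ∈ s, μ (B i)) :
    ∀ᵐ y ∂π, ∀ ε : ℝ, 0 < ε →
      {x : X | ∃ i : ℕ, y i = x ∧ ((i : ℝ) + 1) ≤ ε / (μ {x}).toReal}.Infinite := by
  have hnull : π (⋃ k : ℕ, ⋃ N : ℕ,
      {y : ℕ → X | ∀ n, N ≤ n → ¬ ((n : ℝ) + 1) * (μ {y n}).toReal ≤ 1 / ((k : ℝ) + 1)}) = 0 :=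
    measure_iUnion_null fun k => measure_iUnion_null fun N =>
      statement1_aux X μ hpos π hπ (1 / ((k : ℝ) + 1)) (by positivity) N
  rw [ae_iff]
  refine measure_mono_null (fun y hy => ?_) hnull
  rw [Set.mem_setOf_eq] at hy
  by_contra hyU
  refine hy ?_
  intro ε hε
  simp only [Set.mem_iUnion, not_exists, Set.mem_setOf_eq, not_forall, not_not] at hyU
  -- hyU : ∀ k N, ∃ n, N ≤ n ∧ ((n:ℝ)+1) * (μ {y n}).toReal ≤ 1/(k+1)
  obtain ⟨k, hk⟩ := exists_nat_ge (1 / ε)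
  have hkε : 1 / ((k : ℝ) + 1) ≤ ε := by
    rw [div_le_iff₀ (by positivity)]
    have h1 : 1 / ε ≤ (k : ℝ) + 1 := hk.trans (by linarith)
    calc (1 : ℝ) = ε * (1 / ε) := by field_simp
      _ ≤ ε * ((k : ℝ) + 1) := mul_le_mul_of_nonneg_left h1 hε.le
  set T : Set ℕ := {n | ((n : ℝ) + 1) * (μ {y n}).toReal ≤ 1 / ((k : ℝ) + 1)} with hT
  have hTinf : T.Infinite := by
    apply Set.infinite_of_not_bddAbove
    rintro ⟨b, hb⟩
    obtain ⟨n, hn1, hn2⟩ := hyU k (b + 1)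
    have := hb (show n ∈ T from hn2)
    omega
  by_contra hfin
  rw [Set.not_infinite] at hfin
  set S : Set X := {x : X | ∃ i : ℕ, y i = x ∧ ((i : ℝ) + 1) ≤ ε / (μ {x}).toReal} with hS
  have hmap : ∀ n ∈ T, y n ∈ S := by
    intro n hn
    refine ⟨n, rfl, ?_⟩
    have hp : 0 < (μ {y n}).toReal := ENNReal.toReal_pos (hpos _).ne' (measure_ne_top μ _)
    rw [le_div_iff₀ hp]
    exact (show ((n : ℝ) + 1) * (μ {y n}).toReal ≤ 1 / ((k : ℝ) + 1) from hn).trans hkε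
  have hcover : T ⊆ ⋃ x ∈ S, (T ∩ y ⁻¹' {x}) :=
    fun n hn => Set.mem_biUnion (hmap n hn) ⟨hn, rfl⟩
  have hex : ∃ x ∈ S, (T ∩ y ⁻¹' {x}).Infinite := by
    by_contra hall
    push_neg at hall
    have : T.Finite :=
      Set.Finite.subset (Set.Finite.biUnion hfin fun x hx => hall x hx)
        hcover
    exact hTinf this
  obtain ⟨x, hxS, hxinf⟩ := hex
  have hpx : 0 < (μ {x}).toReal := ENNReal.toReal_pos (hpos _).ne' (measure_ne_top μ _)
  obtain ⟨m, hm⟩ := exists_nat_gt ((1 / ((k : ℝ) + 1)) / (μ {x}).toReal)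
  obtain ⟨n, hnmem, hmn⟩ := hxinf.exists_gt m
  obtain ⟨hnT, hnx⟩ := hnmem
  have hnx' : y n = x := hnx
  have h1 : ((n : ℝ) + 1) * (μ {x}).toReal ≤ 1 / ((k : ℝ) + 1) := by
    have := (show ((n : ℝ) + 1) * (μ {y n}).toReal ≤ 1 / ((k : ℝ) + 1) from hnT)
    rwa [hnx'] at this
  have h2 : 1 / ((k : ℝ) + 1) < (m : ℝ) * (μ {x}).toReal := (div_lt_iff₀ hpx).mp hm
  have h3 : (m : ℝ) ≤ (n : ℝ) + 1 := by
    have : (m : ℝ) < n := by exact_mod_cast hmn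
    linarith
  have h4 : (m : ℝ) * (μ {x}).toReal ≤ ((n : ℝ) + 1) * (μ {x}).toReal :=
    mul_le_mul_of_nonneg_right h3 hpx.le
  linarith
end

section
/- Let X be a countably infinite set, p a discrete probability measure on X with p(x) > 0 for all x, and suppose there is a sequence x_1, x_2, … of distinct elements of X and indices i(n) with y_{i(n)} = x_n and i(n) ≤ n^{-3}/p(x_n), for a fixed sequence y = (y_j) ∈ X^{ℤ≥1}. Define f : X → ℝ≥0 by f(x_n) = n^{-2}/p(x_n) and f(x) = 0 for x not among the x_n. Then ∑_{x∈X} f(x)p(x) converges, but (1/i(n))∑_{j=1}^{i(n)} f(y_j) ≥ n for all n, so the sequence of averages (1/n)∑_{j=1}^n f(y_j) is unbounded and does not converge. -/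
open Filter Topology

/-- Let `X` be a countably infinite set, `p` a discrete probability
measure on `X` (given by its mass function, summing to `1`) with `p(x) > 0` for all `x`,
and `y` a fixed sequence in `X`.  Suppose `x_1, x_2, …` are distinct elements of `X`
(0-indexed: `x n` is `x_{n+1}`) and `i(n)` are indices with `y_{i(n)} = x_n` and
`i(n) ≤ n^{-3}/p(x_n)` (0-indexed: the index `i n` corresponds to the `(i n + 1)`-st
term, so `i n + 1 ≤ (n+1)^{-3}/p(x (n+1))`).  Let `f : X → ℝ≥0` be given by
`f(x_n) = n^{-2}/p(x_n)` and `f = 0` off the `x_n`.  Then `∑_x f(x) p(x)` converges, but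
`(1/i(n)) ∑_{j=1}^{i(n)} f(y_j) ≥ n` for all `n`, so the sequence of averages
`(1/n) ∑_{j=1}^{n} f(y_j)` is unbounded and does not converge. -/
theorem statement3 (X : Type) [Countable X] [Infinite X]
    (p : X → ℝ) (hpos : ∀ x, 0 < p x) (hsum : HasSum p 1)
    (y : ℕ → X) (x : ℕ → X) (hinj : Function.Injective x)
    (i : ℕ → ℕ) (hyx : ∀ n : ℕ, y (i n) = x n)
    (hi : ∀ n : ℕ, ((i n : ℝ) + 1) ≤ (((n : ℝ) + 1) ^ 3)⁻¹ / p (x n))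
    (f : X → ℝ) (hf0 : ∀ z : X, (∀ n : ℕ, z ≠ x n) → f z = 0)
    (hfx : ∀ n : ℕ, f (x n) = (((n : ℝ) + 1) ^ 2)⁻¹ / p (x n)) :
    (∀ z, 0 ≤ f z) ∧
    Summable (fun z : X => f z * p z) ∧
    (∀ n : ℕ, ((n : ℝ) + 1) ≤
      (∑ j ∈ Finset.range (i n + 1), f (y j)) / ((i n : ℝ) + 1)) ∧
    ¬ BddAbove (Set.range (fun n : ℕ => (∑ j ∈ Finset.range n, f (y j)) / (n : ℝ))) ∧
    ¬ ∃ L : ℝ, Tendsto (fun n : ℕ => (∑ j ∈ Finset.range n, f (y j)) / (n : ℝ))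
        atTop (𝓝 L) := by
  have hfnn : ∀ z, 0 ≤ f z := by
    intro z
    by_cases h : ∃ n, z = x n
    · obtain ⟨n, rfl⟩ := h
      rw [hfx]
      have := hpos (x n)
      positivity
    · push_neg at h
      rw [hf0 z h]
  have hfp : ∀ n : ℕ, f (x n) * p (x n) = (((n : ℝ) + 1) ^ 2)⁻¹ := by
    intro n
    rw [hfx]
    exact div_mul_cancel₀ _ (hpos (x n)).ne'
  have hsum2 : Summable (fun z : X => f z * p z) := by
    rw [← hinj.summable_iff (f := fun z : X => f z * p z)]
    · have h1 : Summable (fun n : ℕ => (((n : ℝ) + 1) ^ 2)⁻¹) := by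
        have := (summable_nat_add_iff (f := fun n : ℕ => ((n : ℝ) ^ 2)⁻¹) 1).mpr
          (Real.summable_one_div_nat_pow.mpr one_lt_two |>.congr (by intro n; rw [one_div]))
        exact this.congr (by intro n; push_cast; ring_nf)
      exact h1.congr (fun n => (hfp n).symm)
    · intro z hz
      rw [hf0 z (fun n hn => hz ⟨n, hn.symm⟩), zero_mul]
  have key : ∀ n : ℕ, ((n : ℝ) + 1) ≤
      (∑ j ∈ Finset.range (i n + 1), f (y j)) / ((i n : ℝ) + 1) := by
    intro n
    have hp := hpos (x n)
    have hipos : (0 : ℝ) < (i n : ℝ) + 1 := by positivity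
    rw [le_div_iff₀ hipos]
    have hS : f (y (i n)) ≤ ∑ j ∈ Finset.range (i n + 1), f (y j) :=
      Finset.single_le_sum (fun j _ => hfnn (y j)) (Finset.self_mem_range_succ (i n))
    rw [hyx n, hfx n] at hS
    have h1 : ((n : ℝ) + 1) * ((i n : ℝ) + 1) ≤
        ((n : ℝ) + 1) * ((((n : ℝ) + 1) ^ 3)⁻¹ / p (x n)) :=
      mul_le_mul_of_nonneg_left (hi n) (by positivity)
    have h2 : ((n : ℝ) + 1) * ((((n : ℝ) + 1) ^ 3)⁻¹ / p (x n))
        = (((n : ℝ) + 1) ^ 2)⁻¹ / p (x n) := by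
      field_simp
    linarith
  have hub : ¬ BddAbove (Set.range (fun n : ℕ =>
      (∑ j ∈ Finset.range n, f (y j)) / (n : ℝ))) := by
    rintro ⟨M, hM⟩
    obtain ⟨n, hn⟩ := exists_nat_gt M
    have hv : (∑ j ∈ Finset.range (i n + 1), f (y j)) / ((i n + 1 : ℕ) : ℝ) ≤ M :=
      hM ⟨i n + 1, rfl⟩
    have : ((n : ℝ) + 1) ≤ M := by
      refine le_trans (key n) ?_
      rwa [show ((i n + 1 : ℕ) : ℝ) = (i n : ℝ) + 1 by push_cast; ring] at hv
    have : (n : ℝ) < (n : ℝ) := by linarith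
    exact lt_irrefl _ this
  refine ⟨hfnn, hsum2, key, hub, ?_⟩
  rintro ⟨L, hL⟩
  exact hub hL.bddAbove_range
end

section
/- Let G be a finite abelian group, Ĝ its group of characters into an algebraic closure of ℚ, and for χ, χ' ∈ Ĝ write χ ∼ χ' if ker χ = ker χ'. Then the natural map ℚ[G] → ∏_{χ ∈ Ĝ/∼} ℚ(χ(G)), sending a group-ring element to the tuple of its images under one representative χ of each equivalence class, is an isomorphism of ℚ-algebras. -/
set_option synthInstance.maxHeartbeats 400000
set_option maxHeartbeats 1000000

open MonoidAlgebra IntermediateField Polynomial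

namespace Statement13Aux

noncomputable section

variable {G : Type} [CommGroup G] [Finite G]

local notation "Qbar" => AlgebraicClosure ℚ

/-- The linear extension of a character to the whole group algebra, into `ℚ̄`. -/
def phiHat (χ : G →* Qbarˣ) : MonoidAlgebra ℚ G →ₐ[ℚ] Qbar :=
  MonoidAlgebra.lift ℚ Qbar G ((Units.coeHom Qbar).comp χ)

lemma phiHat_single (χ : G →* Qbarˣ) (g : G) :
    phiHat χ (MonoidAlgebra.single g (1 : ℚ)) = χ g := by
  simp [phiHat]

/-- The subfield generated by the values of the character. -/
def Kf (χ : G →* Qbarˣ) : IntermediateField ℚ Qbar :=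
  IntermediateField.adjoin ℚ (Set.range fun g : G => ((χ g : Qbarˣ) : Qbar))

def chiK (χ : G →* Qbarˣ) : G →* (Kf χ) :=
  ((Units.coeHom Qbar).comp χ).codRestrict (Kf χ) fun g =>
    IntermediateField.subset_adjoin _ _ ⟨g, rfl⟩

/-- The linear extension of a character, into the subfield generated by its values. -/
def phiK (χ : G →* Qbarˣ) : MonoidAlgebra ℚ G →ₐ[ℚ] (Kf χ) :=
  MonoidAlgebra.lift ℚ (Kf χ) G (chiK χ)

lemma phiK_single (χ : G →* Qbarˣ) (g : G) :
    phiK χ (MonoidAlgebra.single g (1 : ℚ)) = chiK χ g := by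
  simp [phiK]

lemma val_phiK (χ : G →* Qbarˣ) (x : MonoidAlgebra ℚ G) :
    (phiK χ x : Qbar) = phiHat χ x := by
  have h : (Kf χ).val.comp (phiK χ) = phiHat χ := by
    refine MonoidAlgebra.algHom_ext ?_ (Subsingleton.elim _ _)
    intro g
    exact (congrArg Subtype.val (phiK_single χ g)).trans (phiHat_single χ g).symm
  exact DFunLike.congr_fun h x

lemma phiK_surjective (χ : G →* Qbarˣ) : Function.Surjective (phiK χ) := by
  have hsub : (Kf χ).toSubalgebra ≤ (phiHat χ).range := by
    rw [show (Kf χ).toSubalgebra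
        = Algebra.adjoin ℚ (Set.range fun g : G => ((χ g : Qbarˣ) : Qbar)) from
      IntermediateField.adjoin_toSubalgebra_of_isAlgebraic fun x _ =>
        (AlgebraicClosure.isAlgebraic ℚ).isAlgebraic x]
    refine Algebra.adjoin_le ?_
    rintro _ ⟨g, rfl⟩
    exact ⟨MonoidAlgebra.single g (1 : ℚ), phiHat_single χ g⟩
  intro y
  obtain ⟨x, hx⟩ := hsub y.2
  exact ⟨x, Subtype.ext (by rw [val_phiK]; exact hx)⟩

lemma ker_phiK_isMaximal (χ : G →* Qbarˣ) : (RingHom.ker (phiK χ)).IsMaximal :=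
  RingHom.ker_isMaximal_of_surjective (phiK χ) (phiK_surjective χ)

lemma monker_eq_of_ker_eq (χ χ' : G →* Qbarˣ)
    (h : RingHom.ker (phiK χ) = RingHom.ker (phiK χ')) : χ.ker = χ'.ker := by
  have key : ∀ ψ : G →* Qbarˣ, ∀ g : G,
      (g ∈ ψ.ker ↔ (MonoidAlgebra.single g (1 : ℚ) - 1) ∈ RingHom.ker (phiK ψ)) := by
    intro ψ g
    rw [RingHom.mem_ker, map_sub, map_one, sub_eq_zero, phiK_single, MonoidHom.mem_ker]
    constructor
    · intro hg
      apply Subtype.ext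
      show ((ψ g : Qbarˣ) : Qbar) = 1
      rw [hg]; rfl
    · intro hg
      have : ((ψ g : Qbarˣ) : Qbar) = 1 := congrArg Subtype.val hg
      exact Units.ext this
  ext g
  rw [key χ g, key χ' g, h]

/-- **Key lemma**: if two characters have the same kernel, vanishing of the linear
extension at `x` transfers from one to the other (they are Galois conjugate). -/
lemma phiHat_eq_zero_of_ker_eq {χ ψ : G →* Qbarˣ} (h : χ.ker = ψ.ker)
    {x : MonoidAlgebra ℚ G} (hx : phiHat χ x = 0) : phiHat ψ x = 0 := by
  classical
  haveI : Finite (χ.range) := (Set.finite_range ⇑χ).to_subtype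
  obtain ⟨ζR, hζR⟩ := IsCyclic.exists_generator (α := χ.range)
  obtain ⟨g₀, hg₀⟩ := ζR.2
  set u : Qbarˣ := χ g₀ with hu
  set n : ℕ := orderOf u with hn
  have hfin : IsOfFinOrder u := by
    rw [hg₀]
    exact (χ.range.subtype).isOfFinOrder (isOfFinOrder_of_finite ζR)
  have hnpos : 0 < n := hfin.orderOf_pos
  have hprim : IsPrimitiveRoot ((u : Qbarˣ) : Qbar) n :=
    IsPrimitiveRoot.coe_units_iff.mpr (IsPrimitiveRoot.orderOf u)
  have horder : orderOf (ψ g₀) = n := by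
    rw [hn, orderOf_eq_orderOf_iff]
    intro m
    rw [← map_pow, ← map_pow, ← MonoidHom.mem_ker, ← MonoidHom.mem_ker, h]
  have hprim' : IsPrimitiveRoot ((ψ g₀ : Qbarˣ) : Qbar) n := by
    rw [← horder]
    exact IsPrimitiveRoot.coe_units_iff.mpr (IsPrimitiveRoot.orderOf _)
  set ζ : Qbar := ((u : Qbarˣ) : Qbar) with hζ
  set ζ' : Qbar := ((ψ g₀ : Qbarˣ) : Qbar) with hζ'
  have hint : IsIntegral ℚ ζ := ((AlgebraicClosure.isAlgebraic ℚ).isAlgebraic ζ).isIntegral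
  have hroot : aeval ζ' (minpoly ℚ ζ) = 0 := by
    rw [← cyclotomic_eq_minpoly_rat hprim hnpos]
    have h2 := hprim'.isRoot_cyclotomic hnpos
    rwa [IsRoot.def, ← map_cyclotomic n (algebraMap ℚ Qbar), eval_map, ← aeval_def] at h2
  set σ0 : ℚ⟮ζ⟯ →ₐ[ℚ] Qbar :=
    (AdjoinRoot.liftAlgHom (minpoly ℚ ζ) (Algebra.ofId ℚ Qbar) ζ' hroot).comp
      (adjoinRootEquivAdjoin ℚ hint).symm.toAlgHom with hσ0
  have hgen : σ0 (AdjoinSimple.gen ℚ ζ) = ζ' := by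
    rw [hσ0]
    exact (congrArg (AdjoinRoot.liftAlgHom (minpoly ℚ ζ) (Algebra.ofId ℚ Qbar) ζ' hroot)
      (adjoinRootEquivAdjoin_symm_apply_gen ℚ hint)).trans (AdjoinRoot.liftAlgHom_root _ _ _ _)
  have hkey : ∀ g : G, ∃ k : ℕ, χ g = u ^ k ∧ ψ g = ψ g₀ ^ k := by
    intro g
    have h1 := hζR ⟨χ g, ⟨g, rfl⟩⟩
    rw [← mem_powers_iff_mem_zpowers] at h1
    obtain ⟨k, hk⟩ := h1
    have hcoe : (ζR : Qbarˣ) ^ k = χ g := by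
      have h2 := congrArg Subtype.val hk
      rw [SubmonoidClass.coe_pow] at h2
      exact h2
    have hk1 : χ g = u ^ k := by rw [hg₀]; exact hcoe.symm
    have hker : g * (g₀ ^ k)⁻¹ ∈ χ.ker := by
      rw [MonoidHom.mem_ker, map_mul, map_inv, map_pow, mul_inv_eq_one, hk1, hu]
    rw [h, MonoidHom.mem_ker, map_mul, map_inv, map_pow, mul_inv_eq_one] at hker
    exact ⟨k, hk1, hker⟩
  have hmemK : ∀ g : G, ((Units.coeHom Qbar).comp χ) g ∈ ℚ⟮ζ⟯ := by
    intro g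
    obtain ⟨k, hk, -⟩ := hkey g
    show ((χ g : Qbarˣ) : Qbar) ∈ ℚ⟮ζ⟯
    rw [hk, Units.val_pow_eq_pow_val]
    exact pow_mem (IntermediateField.mem_adjoin_simple_self ℚ ζ) k
  set fK : MonoidAlgebra ℚ G →ₐ[ℚ] ℚ⟮ζ⟯ :=
    MonoidAlgebra.lift ℚ ℚ⟮ζ⟯ G
      (((Units.coeHom Qbar).comp χ).codRestrict ℚ⟮ζ⟯.toSubfield hmemK) with hfK
  have hfK1 : ∀ y, phiHat χ y = algebraMap ℚ⟮ζ⟯ Qbar (fK y) := by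
    have heq : (ℚ⟮ζ⟯.val).comp fK = phiHat χ := by
      refine MonoidAlgebra.algHom_ext ?_ (Subsingleton.elim _ _)
      intro g
      simp only [hfK, phiHat, AlgHom.coe_comp, Function.comp_apply,
        MonoidAlgebra.lift_single, one_smul]
      exact congrArg Subtype.val (MonoidAlgebra.lift_of (R := ℚ) (A := ℚ⟮ζ⟯)
        (((Units.coeHom Qbar).comp χ).codRestrict ℚ⟮ζ⟯.toSubfield hmemK) g)
    intro y
    rw [← heq]
    rfl
  have hfK2 : σ0.comp fK = phiHat ψ := by
    refine MonoidAlgebra.algHom_ext ?_ (Subsingleton.elim _ _)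
    intro g
    obtain ⟨k, hk, hk'⟩ := hkey g
    have e1 : fK (MonoidAlgebra.single g (1 : ℚ)) = (AdjoinSimple.gen ℚ ζ) ^ k := by
      apply Subtype.ext
      show ((fK (MonoidAlgebra.single g (1 : ℚ)) : Qbar)) = (((AdjoinSimple.gen ℚ ζ) ^ k : ℚ⟮ζ⟯) : Qbar)
      have : fK (MonoidAlgebra.single g (1 : ℚ))
          = (((Units.coeHom Qbar).comp χ).codRestrict ℚ⟮ζ⟯.toSubfield hmemK) g := by
        simp only [hfK, MonoidAlgebra.lift_single, one_smul]
      rw [this]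
      have hcoe : (((AdjoinSimple.gen ℚ ζ) ^ k : ℚ⟮ζ⟯) : Qbar) = ζ ^ k := by
        rw [SubmonoidClass.coe_pow, IntermediateField.AdjoinSimple.coe_gen]
      rw [hcoe]
      show ((χ g : Qbarˣ) : Qbar) = ζ ^ k
      rw [hk, hζ, Units.val_pow_eq_pow_val]
    rw [AlgHom.comp_apply, e1, map_pow, hgen, phiHat_single]
    show ζ' ^ k = ((ψ g : Qbarˣ) : Qbar)
    rw [hk', hζ', Units.val_pow_eq_pow_val]
  have hfK0 : fK x = 0 := by
    have h0 := hfK1 x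
    rw [hx] at h0
    exact (map_eq_zero_iff (algebraMap ℚ⟮ζ⟯ Qbar)
      (algebraMap ℚ⟮ζ⟯ Qbar).injective).mp h0.symm
  calc phiHat ψ x = σ0 (fK x) := (DFunLike.congr_fun hfK2 x).symm
    _ = 0 := by rw [hfK0, map_zero]

/-- If all characters kill `x`, then `x = 0` (linear independence of characters and
duality for finite abelian groups). -/
lemma eq_zero_of_forall_phiHat_eq_zero (x : MonoidAlgebra ℚ G)
    (hx : ∀ ψ : G →* Qbarˣ, phiHat ψ x = 0) : x = 0 := by
  classical
  haveI : Fintype G := Fintype.ofFinite G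
  haveI : NeZero (Monoid.exponent G) := ⟨Monoid.exponent_ne_zero_of_finite⟩
  obtain ⟨e⟩ := CommGroup.monoidHom_mulEquiv_of_hasEnoughRootsOfUnity G Qbar
  haveI : Finite (G →* Qbarˣ) := Finite.of_equiv G e.toEquiv.symm
  haveI : Fintype (G →* Qbarˣ) := Fintype.ofFinite _
  -- the characters, as functions `G → ℚ̄`, are linearly independent
  have hinj : Function.Injective
      (fun ψ : G →* Qbarˣ => (Units.coeHom Qbar).comp ψ) := by
    intro ψ₁ ψ₂ hψ
    ext g
    exact DFunLike.congr_fun hψ g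
  have li : LinearIndependent Qbar
      (fun ψ : G →* Qbarˣ => ((fun g => ((ψ g : Qbarˣ) : Qbar)) : G → Qbar)) :=
    (linearIndependent_monoidHom G Qbar).comp _ hinj
  have hcard : Fintype.card (G →* Qbarˣ) = Module.finrank Qbar (G → Qbar) := by
    rw [Module.finrank_pi, Fintype.card_congr e.toEquiv]
  haveI : Nonempty (G →* Qbarˣ) := ⟨1⟩
  let B := basisOfLinearIndependentOfCardEqFinrank li hcard
  -- the pairing with the coefficients of `x`
  let L : (G → Qbar) →ₗ[Qbar] Qbar :=
    ∑ g : G, (algebraMap ℚ Qbar (x.coeff g)) • (LinearMap.proj g)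
  have hL : ∀ u : G → Qbar, L u = ∑ g : G, (algebraMap ℚ Qbar (x.coeff g)) * u g := by
    intro u
    simp [L, LinearMap.sum_apply]
  have hLB : ∀ ψ : G →* Qbarˣ, L (B ψ) = 0 := by
    intro ψ
    have hB : B ψ = fun g => ((ψ g : Qbarˣ) : Qbar) :=
      congrFun (coe_basisOfLinearIndependentOfCardEqFinrank li hcard) ψ
    rw [hB, hL]
    have := hx ψ
    rw [phiHat] at this
    rw [MonoidAlgebra.lift_apply] at this
    rw [Finsupp.sum_fintype _ _ (fun g => by simp)] at this
    simpa [Algebra.smul_def] using this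
  have hL0 : L = 0 := B.ext fun ψ => by rw [hLB]; rfl
  have hcoef : ∀ h : G, x.coeff h = 0 := by
    intro h
    have h1 : L (Pi.single h 1) = 0 := by rw [hL0]; rfl
    rw [hL] at h1
    have h2 : ∑ g : G, (algebraMap ℚ Qbar (x.coeff g)) * (Pi.single h 1 : G → Qbar) g
        = algebraMap ℚ Qbar (x.coeff h) := by
      rw [Finset.sum_eq_single_of_mem h (Finset.mem_univ h)]
      · simp
      · intro b _ hb
        simp [Pi.single_apply, hb]
    rw [h2] at h1
    exact (map_eq_zero_iff _ (algebraMap ℚ Qbar).injective).mp h1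
  exact MonoidAlgebra.ext (Finsupp.ext hcoef)

end

end Statement13Aux

/-- Let `G` be a finite abelian group, `Ĝ` its group of characters with
values in an algebraic closure `ℚ̄` of `ℚ`, and write `χ ∼ χ'` when `ker χ = ker χ'`.
Given a set `reps` of representatives of the equivalence classes of `∼`, the natural
`ℚ`-algebra map `ℚ[G] → ∏_{χ ∈ Ĝ/∼} ℚ(χ(G))`, sending a group-ring element to the tuple
of its images under the (linear extension of the) representatives `χ`, is an isomorphism
of `ℚ`-algebras (i.e. the map is bijective); here `ℚ(χ(G))` is the subfield of `ℚ̄`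
generated over `ℚ` by the values of `χ`. -/
theorem statement13 (G : Type) [CommGroup G] [Finite G]
    (reps : Finset (G →* (AlgebraicClosure ℚ)ˣ))
    (hreps : ∀ χ : G →* (AlgebraicClosure ℚ)ˣ,
      ∃! χ' : G →* (AlgebraicClosure ℚ)ˣ, χ' ∈ reps ∧ χ'.ker = χ.ker) :
    ∃ Φ : MonoidAlgebra ℚ G →ₐ[ℚ] (∀ χ : reps,
        ↥(IntermediateField.adjoin ℚ
            (Set.range (fun g : G => ((χ.1 g : (AlgebraicClosure ℚ)ˣ) : AlgebraicClosure ℚ))))),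
      (∀ (χ : reps) (g : G),
        ((Φ (MonoidAlgebra.single g (1 : ℚ)) χ : AlgebraicClosure ℚ))
          = ((χ.1 g : (AlgebraicClosure ℚ)ˣ) : AlgebraicClosure ℚ)) ∧
      Function.Bijective Φ := by
  classical
  open Statement13Aux in
  refine ⟨Pi.algHom ℚ _ (fun χ : reps => phiK χ.1), ?_, ?_, ?_⟩
  · -- the component formula
    intro χ g
    show ((phiK χ.1 (MonoidAlgebra.single g (1 : ℚ)) : AlgebraicClosure ℚ)) = _
    rw [phiK_single]
    rfl
  · -- injectivity
    rw [injective_iff_map_eq_zero]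
    intro x hx
    refine eq_zero_of_forall_phiHat_eq_zero x fun ψ => ?_
    obtain ⟨c, ⟨hcmem, hcker⟩, -⟩ := hreps ψ
    refine phiHat_eq_zero_of_ker_eq hcker ?_
    have h0 : phiK c x = 0 := congrFun hx ⟨c, hcmem⟩
    rw [← val_phiK, h0]
    rfl
  · -- surjectivity, via the Chinese remainder theorem
    intro y
    set I : reps → Ideal (MonoidAlgebra ℚ G) := fun χ => RingHom.ker (phiK χ.1) with hI
    have hmax : ∀ i, (I i).IsMaximal := fun i => ker_phiK_isMaximal i.1
    have hcop : Pairwise (Function.onFun IsCoprime I) := by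
      intro i j hij
      refine Ideal.isCoprime_iff_sup_eq.mpr ((hmax i).coprime_of_ne (hmax j) ?_)
      intro hEq
      apply hij
      have hker : (i : G →* (AlgebraicClosure ℚ)ˣ).ker = (j : G →* (AlgebraicClosure ℚ)ˣ).ker :=
        monker_eq_of_ker_eq _ _ hEq
      obtain ⟨c, -, hcuniq⟩ := hreps i.1
      have h1 : (i : G →* (AlgebraicClosure ℚ)ˣ) = c := hcuniq i.1 ⟨i.2, rfl⟩
      have h2 : (j : G →* (AlgebraicClosure ℚ)ˣ) = c := hcuniq j.1 ⟨j.2, hker.symm⟩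
      exact Subtype.ext (h1.trans h2.symm)
    choose xs hxs using fun i : reps => phiK_surjective i.1 (y i)
    obtain ⟨z, hz⟩ := Ideal.quotientInfToPiQuotient_surj hcop
      (fun i => Ideal.Quotient.mk (I i) (xs i))
    obtain ⟨x, rfl⟩ := Ideal.Quotient.mk_surjective z
    refine ⟨x, funext fun i => ?_⟩
    have hi := congrFun hz i
    rw [Ideal.quotientInfToPiQuotient_mk'] at hi
    have hxi : x - xs i ∈ I i := by
      rwa [Ideal.Quotient.eq] at hi
    have h0 : phiK i.1 (x - xs i) = 0 := by
      rw [hI] at hxi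
      exact hxi
    rw [map_sub, sub_eq_zero] at h0
    show phiK i.1 x = y i
    rw [h0, hxs i]
end
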